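/- arXiv:math/0003020 — 4 statements merged into one kernel-verified Lean document; each statement's English description precedes it below -/
import Mathlib

section
/- Let X and Y be real Banach spaces such that X contains a closed subspace isomorphic to c₀, let k ≥ 2 be an integer, and let P : X → Y be a continuous k-homogeneous polynomial. Then there is a series ∑ x_i in X which is weakly unconditionally Cauchy but not unconditionally convergent, and such that the series ∑ P(x_i) is unconditionally convergent in Y. -/
open Filter Topology Metric

noncomputable section

/-- The Banach space `c₀` of real sequences converging to zero, with the sup norm. -/
abbrev c0 : Type := ZeroAtInftyContinuousMap ℕ ℝ

/-- The unit vector basis of `c₀`. -/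
def e (n : ℕ) : c0 :=
  { toFun := fun i => if i = n then (1 : ℝ) else 0
    continuous_toFun := continuous_of_discreteTopology
    zero_at_infty' := by
      rw [Filter.cocompact_eq_cofinite]
      refine tendsto_const_nhds.congr' ?_
      have h : {n}ᶜ ∈ (Filter.cofinite : Filter ℕ) := by simp [Filter.cofinite]
      filter_upwards [h] with i hi
      simp only [Set.mem_compl_iff, Set.mem_singleton_iff] at hi
      simp [hi] }

/-- A series `∑ xₙ` is weakly unconditionally Cauchy (w.u.C.) if `∑ |φ (xₙ)| < ∞` for every
continuous linear functional `φ`. -/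
def WUC {X : Type*} [NormedAddCommGroup X] [NormedSpace ℝ X] (x : ℕ → X) : Prop :=
  ∀ φ : X →L[ℝ] ℝ, Summable fun n => |φ (x n)|

/-- A sequence is equivalent to the unit vector basis of `c₀`: there are `0 < c ≤ C` with
`c · maxᵢ |aᵢ| ≤ ‖∑ aᵢ xᵢ‖ ≤ C · maxᵢ |aᵢ|` for all finite scalar families. -/
def IsEquivC0Basis {X : Type*} [NormedAddCommGroup X] [NormedSpace ℝ X] (x : ℕ → X) : Prop :=
  ∃ c C : ℝ, 0 < c ∧ c ≤ C ∧ ∀ (n : ℕ) (a : ℕ → ℝ),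
    c * (⨆ i : Fin n, |a i|) ≤ ‖∑ i ∈ Finset.range n, a i • x i‖ ∧
    ‖∑ i ∈ Finset.range n, a i • x i‖ ≤ C * (⨆ i : Fin n, |a i|)

/-- A map (polynomial) is unconditionally converging if for every w.u.C. series `∑ xₙ` the
sequence of values at the partial sums converges in norm. -/
def UCPoly {X Y : Type*} [NormedAddCommGroup X] [NormedSpace ℝ X]
    [NormedAddCommGroup Y] [NormedSpace ℝ Y] (P : X → Y) : Prop :=
  ∀ x : ℕ → X, WUC x →
    ∃ L : Y, Tendsto (fun n => P (∑ i ∈ Finset.range n, x i)) atTop (𝓝 L)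

/-- An operator is unconditionally converging if it maps w.u.C. series to unconditionally
convergent series. -/
def UCOp {X Y : Type*} [NormedAddCommGroup X] [NormedSpace ℝ X]
    [NormedAddCommGroup Y] [NormedSpace ℝ Y] (T : X → Y) : Prop :=
  ∀ x : ℕ → X, WUC x → Summable fun n => T (x n)

/-- A map (polynomial or operator) is compact if the image of the closed unit ball is
relatively norm compact. -/
def CompactMap {X Y : Type*} [NormedAddCommGroup X] [NormedSpace ℝ X]
    [NormedAddCommGroup Y] [NormedSpace ℝ Y] (P : X → Y) : Prop :=
  IsCompact (closure (P '' Metric.closedBall 0 1))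

/-- A set is relatively weakly compact if its closure in the weak topology is compact. -/
def RelWeakCompact {Y : Type*} [NormedAddCommGroup Y] [NormedSpace ℝ Y] (s : Set Y) : Prop :=
  IsCompact (closure ((toWeakSpace ℝ Y) '' s))

/-- A WUC-set is the image of the closed unit ball of `c₀` under a bounded operator. -/
def IsWUCSet {X : Type*} [NormedAddCommGroup X] [NormedSpace ℝ X] (s : Set X) : Prop :=
  ∃ T : c0 →L[ℝ] X, s = ⇑T '' Metric.closedBall 0 1

/-!
Let `yₘ` be the image in `X` of the unit vector `eₘ` of `c₀`, and spread `yₘ` over a block of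
`2 ^ m` terms, each equal to `2⁻ᵐ • yₘ`. Every functional sees on this series the same absolute
sums as on `(yₘ)`, so it is w.u.C.; its block sums are the `yₘ`, which stay away from zero, so it
does not converge. A `k`-homogeneous polynomial scales the terms by `2⁻ᵐᵏ`, hence the `m`-th block
of `∑ P xᵢ` has norm `O(2⁻ᵐ⁽ᵏ⁻¹⁾)` and `∑ P xᵢ` converges absolutely as soon as `k ≥ 2`. Since all
three properties are unconditional, the blocks may be enumerated in any order.
-/
lemma e_apply (m i : ℕ) : e m i = if i = m then 1 else 0 := rfl

lemma c0_sum_apply {ι : Type*} (s : Finset ι) (f : ι → c0) (i : ℕ) :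
    (∑ m ∈ s, f m) i = ∑ m ∈ s, f m i :=
  map_sum (⟨⟨fun g : c0 => g i, rfl⟩, fun _ _ => rfl⟩ : c0 →+ ℝ) f s

lemma c0_abs_apply_le_norm (f : c0) (i : ℕ) : |f i| ≤ ‖f‖ :=
  f.toBCF.norm_coe_le_norm i

lemma c0_norm_le_of_forall_abs_apply_le {f : c0} {C : ℝ} (hC : 0 ≤ C) (h : ∀ i, |f i| ≤ C) :
    ‖f‖ ≤ C :=
  (BoundedContinuousFunction.norm_le hC).2 h

lemma norm_e (m : ℕ) : ‖e m‖ = 1 :=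
  le_antisymm
    (c0_norm_le_of_forall_abs_apply_le zero_le_one fun i => by
      rw [e_apply]; split_ifs <;> simp)
    (by simpa [e_apply] using c0_abs_apply_le_norm (e m) m)

lemma norm_sum_smul_e_le_one (s : Finset ℕ) {a : ℕ → ℝ} (ha : ∀ m, |a m| ≤ 1) :
    ‖∑ m ∈ s, a m • e m‖ ≤ 1 :=
  c0_norm_le_of_forall_abs_apply_le zero_le_one fun i => by
    simp only [c0_sum_apply, ZeroAtInftyContinuousMap.coe_smul, Pi.smul_apply, e_apply,
      smul_eq_mul, mul_ite, mul_one, mul_zero, Finset.sum_ite_eq]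
    split_ifs
    exacts [ha i, by simp]

lemma abs_sign_le_one (x : ℝ) : |(SignType.sign x : ℝ)| ≤ 1 := by
  rcases SignType.sign x with _ | _ | _ <;> simp

lemma wuc_e : WUC e := fun ψ =>
  summable_of_sum_le (fun _ => abs_nonneg _) fun s =>
    calc ∑ m ∈ s, |ψ (e m)| = ψ (∑ m ∈ s, (SignType.sign (ψ (e m)) : ℝ) • e m) := by
          simp [map_sum, sign_mul_self]
      _ ≤ ‖ψ‖ * ‖∑ m ∈ s, (SignType.sign (ψ (e m)) : ℝ) • e m‖ :=
          (le_abs_self _).trans (ψ.le_opNorm _)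
      _ ≤ ‖ψ‖ := mul_le_of_le_one_right (norm_nonneg ψ)
          (norm_sum_smul_e_le_one s fun m => abs_sign_le_one _)

lemma WUC.map {X Y : Type*} [NormedAddCommGroup X] [NormedSpace ℝ X]
    [NormedAddCommGroup Y] [NormedSpace ℝ Y] {x : ℕ → X} (hx : WUC x) (T : X →L[ℝ] Y) :
    WUC (T ∘ x) :=
  fun φ => hx (φ.comp T)

section DyadicBlocks

variable {E : Type*} [NormedAddCommGroup E] [NormedSpace ℝ E]

def dyadicBlocks (v : ℕ → E) (p : Σ m : ℕ, Fin (2 ^ m)) : E :=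
  (2 ^ p.1 : ℝ)⁻¹ • v p.1

lemma hasSum_dyadicBlocks_block (v : ℕ → E) (m : ℕ) :
    HasSum (fun i : Fin (2 ^ m) => dyadicBlocks v ⟨m, i⟩) (v m) := by
  convert hasSum_fintype (fun i : Fin (2 ^ m) => dyadicBlocks v ⟨m, i⟩) using 1
  simp [dyadicBlocks, ← Nat.cast_smul_eq_nsmul ℝ, smul_smul]

lemma Summable.of_dyadicBlocks {v : ℕ → E} (h : Summable (dyadicBlocks v)) : Summable v :=
  ⟨_, h.hasSum.sigma (hasSum_dyadicBlocks_block v)⟩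

lemma summable_dyadicBlocks_of_nonneg {a : ℕ → ℝ} (ha : ∀ m, 0 ≤ a m) (h : Summable a) :
    Summable (dyadicBlocks a) := by
  refine (summable_sigma_of_nonneg fun p => ?_).2
    ⟨fun m => (hasSum_dyadicBlocks_block a m).summable, ?_⟩
  · exact smul_nonneg (by positivity) (ha p.1)
  · simpa only [(hasSum_dyadicBlocks_block a _).tsum_eq] using h

lemma WUC.dyadicBlocks_comp {v : ℕ → E} (hv : WUC v) (σ : ℕ ≃ Σ m : ℕ, Fin (2 ^ m)) :
    WUC (dyadicBlocks v ∘ σ) := by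
  intro φ
  have habs : (fun p => |φ (dyadicBlocks v p)|) = dyadicBlocks fun m => |φ (v m)| := by
    ext p
    simp [dyadicBlocks, abs_mul]
  exact σ.summable_iff.2 (habs ▸ summable_dyadicBlocks_of_nonneg (fun _ => abs_nonneg _) (hv φ))

lemma ContinuousMultilinearMap.summable_apply_const_dyadicBlocks {F : Type*}
    [NormedAddCommGroup F] [NormedSpace ℝ F] [CompleteSpace F] {k : ℕ} (hk : 2 ≤ k)
    (A : ContinuousMultilinearMap ℝ (fun _ : Fin k => E) F) {v : ℕ → E} {B : ℝ}
    (hB : ∀ m, ‖v m‖ ≤ B) :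
    Summable fun p => A fun _ => dyadicBlocks v p := by
  have hB0 : 0 ≤ B := (norm_nonneg _).trans (hB 0)
  refine .of_norm_bounded (g := dyadicBlocks fun m => (2 ^ m : ℝ)⁻¹ * (‖A‖ * B ^ k))
    (summable_dyadicBlocks_of_nonneg (fun m => by positivity)
      ((summable_geometric_two.congr fun m => by simp).mul_right _)) fun ⟨m, i⟩ => ?_
  have hm : ‖dyadicBlocks v ⟨m, i⟩‖ ≤ (2 ^ m : ℝ)⁻¹ * B := by
    rw [dyadicBlocks, norm_smul, norm_inv, norm_pow, Real.norm_two]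
    gcongr
    exact hB m
  calc ‖A fun _ => dyadicBlocks v ⟨m, i⟩‖ ≤ ‖A‖ * ((2 ^ m : ℝ)⁻¹ * B) ^ k := by
        simpa using A.le_opNorm_mul_prod_of_le fun _ => hm
    _ = ((2 ^ m : ℝ)⁻¹) ^ k * (‖A‖ * B ^ k) := by ring
    _ ≤ ((2 ^ m : ℝ)⁻¹) ^ 2 * (‖A‖ * B ^ k) := by
        have h2 : (2 ^ m : ℝ)⁻¹ ≤ 1 := inv_le_one_of_one_le₀ (one_le_pow₀ one_le_two)
        gcongr (?_ : ℝ) * _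
        exact pow_le_pow_of_le_one (by positivity) h2 hk
    _ = dyadicBlocks (fun m => (2 ^ m : ℝ)⁻¹ * (‖A‖ * B ^ k)) ⟨m, i⟩ := by
        simp only [dyadicBlocks, smul_eq_mul]
        ring

end DyadicBlocks

theorem wuc_not_uc_image_uc_general {X Y : Type*}
    [NormedAddCommGroup X] [NormedSpace ℝ X]
    [NormedAddCommGroup Y] [NormedSpace ℝ Y] [CompleteSpace Y]
    (hc0 : ∃ j : c0 →L[ℝ] X, ∃ c : ℝ, 0 < c ∧ ∀ z, c * ‖z‖ ≤ ‖j z‖)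
    (k : ℕ) (hk : 2 ≤ k) (A : ContinuousMultilinearMap ℝ (fun _ : Fin k => X) Y) :
    ∃ x : ℕ → X, WUC x ∧ ¬ Summable x ∧ Summable fun i => A fun _ => x i := by
  obtain ⟨j, c, hc, hj⟩ := hc0
  obtain ⟨σ⟩ := nonempty_equiv_of_countable (α := ℕ) (β := Σ m : ℕ, Fin (2 ^ m))
  have hj_le : ∀ m, ‖j (e m)‖ ≤ ‖j‖ := fun m => by simpa [norm_e] using j.le_opNorm (e m)
  refine ⟨dyadicBlocks (j ∘ e) ∘ σ, (wuc_e.map j).dyadicBlocks_comp σ, fun hsum => ?_,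
    σ.summable_iff.2 (A.summable_apply_const_dyadicBlocks hk hj_le)⟩
  obtain ⟨m, hm⟩ := ((σ.summable_iff.1 hsum).of_dyadicBlocks.tendsto_atTop_zero.eventually
    (ball_mem_nhds 0 hc)).exists
  have hjm := hj (e m)
  rw [norm_e, mul_one] at hjm
  rw [Function.comp_apply, dist_zero_right] at hm
  linarith

/-- If `X` contains a copy of `c₀` and `k ≥ 2`, every continuous `k`-homogeneous polynomial
`P : X → Y` admits a w.u.C. non-u.c. series `∑ xᵢ` with `∑ P xᵢ` unconditionally convergent. -/
theorem wuc_not_uc_image_uc {X Y : Type*}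
    [NormedAddCommGroup X] [NormedSpace ℝ X] [CompleteSpace X]
    [NormedAddCommGroup Y] [NormedSpace ℝ Y] [CompleteSpace Y]
    (hc0 : ∃ j : c0 →L[ℝ] X, ∃ c : ℝ, 0 < c ∧ ∀ z, c * ‖z‖ ≤ ‖j z‖)
    (k : ℕ) (hk : 2 ≤ k) (A : ContinuousMultilinearMap ℝ (fun _ : Fin k => X) Y) :
    ∃ x : ℕ → X, WUC x ∧ ¬ Summable x ∧ Summable fun i => A fun _ => x i :=
  wuc_not_uc_image_uc_general hc0 k hk A
end
end

section
/- Let X be a real Banach space and k ≥ 1 an integer. If a sequence (xₙ) in X is equivalent to the c₀-basis, then the sequence of diagonal tensors (xₙ ⊗ ⋯ ⊗ xₙ) (k factors) in the k-fold algebraic tensor product ⊗^k X is equivalent to the c₀-basis with respect to the projective seminorm: there exist constants 0 < c ≤ C such that c·maxᵢ|aᵢ| ≤ π(∑_{i=1}^n aᵢ · x_i^{⊗k}) ≤ C·maxᵢ|aᵢ| for all n and all scalars a₁,…,aₙ. -/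
open Filter Topology Metric

noncomputable section

open scoped TensorProduct

/-!
Let `c, C` be the constants of `(xₙ)`.

Lower estimate: by Hahn–Banach, `x₀, …, xₙ₋₁` have biorthogonal functionals `φⱼ` of norm at
most `1/c`, and `φⱼ ⊗ ⋯ ⊗ φⱼ` is a `k`-linear form of norm at most `c⁻ᵏ` sending
`∑ aᵢ xᵢ^{⊗k}` to `aⱼ`.

Upper estimate: Rademacher averaging over independent sign vectors `ε₁, …, εₖ₋₁ ∈ {±1}ⁿ` of
`(∑ aⱼ ε₁ⱼ xⱼ) ⊗ (∑ ε₁ⱼ ε₂ⱼ xⱼ) ⊗ ⋯ ⊗ (∑ εₖ₋₁ⱼ xⱼ)` gives `∑ aⱼ xⱼ^{⊗k}`, because only constant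
multi-indices survive the average. Each factor has norm at most `C · maxⱼ |aⱼ|` (the first) or
`C` (the others), so `π(∑ aⱼ xⱼ^{⊗k}) ≤ Cᵏ · maxⱼ |aⱼ|`.
-/

open Finset PiTensorProduct

section ChainWeight

variable {R : Type*} [CommRing R] {ι : Type*}

def boolSign (b : Bool) : R := if b then 1 else -1

theorem boolSign_mul_self (b : Bool) : boolSign b * boolSign b = (1 : R) := by
  cases b <;> simp [boolSign]

theorem boolSign_not (b : Bool) : boolSign (!b) = -(boolSign b : R) := by
  cases b <;> simp [boolSign]

theorem sum_boolSign_mul_boolSign [Fintype ι] [DecidableEq ι] (u w : ι) :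
    ∑ g : ι → Bool, boolSign (g u) * boolSign (g w) =
      if u = w then (2 : R) ^ Fintype.card ι else 0 := by
  split_ifs with huw
  · subst huw
    simp [boolSign_mul_self]
  · -- flipping `g u` negates the summand
    refine sum_involution (fun g _ => Function.update g u (!g u)) (fun g _ => ?_)
      (fun g _ _ h => by simpa using congrFun h u) (fun _ _ => mem_univ _) (fun g _ => ?_)
    · simp [Function.update_of_ne (Ne.symm huw), boolSign_not]
    · ext i
      rcases eq_or_ne i u with rfl | hi <;> simp [*]

variable {m : ℕ}

/-- The coefficient of `y j` in factor `t` of the averaged tensor: `ε (t-1) j * ε t j`, reading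
`ε (-1) = a` and `ε m = 1`. -/
def chainWeight (a : ι → R) (ε : Fin m → ι → Bool) (t : Fin (m + 1)) (j : ι) : R :=
  Fin.cons (α := fun _ => R) (a j) (fun s => boolSign (ε s j)) t *
    Fin.snoc (α := fun _ => R) (fun s => boolSign (ε s j)) 1 t

theorem prod_chainWeight (a : ι → R) (ε : Fin m → ι → Bool) (p : Fin (m + 1) → ι) :
    ∏ t, chainWeight a ε t (p t) =
      a (p 0) * ∏ s, (boolSign (ε s (p s.castSucc)) * boolSign (ε s (p s.succ))) := by
  simp only [chainWeight, prod_mul_distrib]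
  rw [Fin.prod_univ_succ, Fin.prod_univ_castSucc]
  simp only [Fin.cons_zero, Fin.cons_succ, Fin.snoc_castSucc, Fin.snoc_last, mul_one]
  ring

theorem Fin.eq_const_of_forall_castSucc_eq_succ {α : Type*} {p : Fin (m + 1) → α}
    (hp : ∀ s : Fin m, p s.castSucc = p s.succ) : p = Function.const _ (p 0) := by
  funext t
  induction t using Fin.induction with
  | zero => rfl
  | succ s ih => rw [← hp s, ih]; rfl

theorem sum_prod_chainWeight [Fintype ι] [DecidableEq ι] (a : ι → R) (p : Fin (m + 1) → ι) :
    ∑ ε : Fin m → ι → Bool, ∏ t, chainWeight a ε t (p t) =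
      if ∀ s : Fin m, p s.castSucc = p s.succ then (2 : R) ^ (Fintype.card ι * m) * a (p 0)
      else 0 := by
  simp only [prod_chainWeight, ← mul_sum]
  rw [← Fintype.prod_sum (κ := fun _ => ι → Bool)
    (fun (s : Fin m) (g : ι → Bool) => boolSign (g (p s.castSucc)) * boolSign (g (p s.succ)))]
  simp only [sum_boolSign_mul_boolSign, prod_ite_zero, mem_univ, forall_const, prod_const,
    card_univ, Fintype.card_fin]
  split_ifs <;> simp [← pow_mul, mul_comm]

theorem sum_tprod_chainWeight [Fintype ι] [DecidableEq ι] {M : Type*} [AddCommGroup M]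
    [Module R M] (a : ι → R) (y : ι → M) :
    ∑ ε : Fin m → ι → Bool, tprod R (fun t => ∑ j, chainWeight a ε t j • y j) =
      (2 : R) ^ (Fintype.card ι * m) • ∑ j, a j • tprod R (fun _ : Fin (m + 1) => y j) := by
  simp only [MultilinearMap.map_sum, MultilinearMap.map_smul_univ]
  rw [sum_comm]
  simp only [← sum_smul, sum_prod_chainWeight, smul_sum, smul_smul]
  refine (Fintype.sum_of_injective (Function.const (Fin (m + 1))) Function.const_injective
    _ _ ?_ ?_).symm
  · intro p hp
    rw [if_neg fun h => hp ⟨p 0, (Fin.eq_const_of_forall_castSucc_eq_succ h).symm⟩, zero_smul]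
  · intro j
    simp

theorem abs_boolSign (b : Bool) : |(boolSign b : ℝ)| = 1 := by
  cases b <;> simp [boolSign]

theorem abs_snoc_boolSign (ε : Fin m → ι → Bool) (j : ι) (t : Fin (m + 1)) :
    |Fin.snoc (α := fun _ => ℝ) (fun s => boolSign (ε s j)) 1 t| = 1 := by
  induction t using Fin.lastCases <;> simp [abs_boolSign]

theorem abs_chainWeight_zero (a : ι → ℝ) (ε : Fin m → ι → Bool) (j : ι) :
    |chainWeight a ε 0 j| = |a j| := by
  rw [chainWeight, abs_mul, abs_snoc_boolSign, Fin.cons_zero, mul_one]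

theorem abs_chainWeight_succ (a : ι → ℝ) (ε : Fin m → ι → Bool) (s : Fin m) (j : ι) :
    |chainWeight a ε s.succ j| = 1 := by
  rw [chainWeight, abs_mul, abs_snoc_boolSign, Fin.cons_succ, abs_boolSign, mul_one]

end ChainWeight

section Normed

variable {X : Type*} {ι : Type*}

theorem norm_sum_smul_tprod_le [Fintype ι] [SeminormedAddCommGroup X] [NormedSpace ℝ X]
    {y : ι → X} {C : ℝ}
    (hC : ∀ b : ι → ℝ, ‖∑ j, b j • y j‖ ≤ C * ⨆ j, |b j|) (m : ℕ) (a : ι → ℝ) :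
    ‖∑ j, a j • tprod ℝ (fun _ : Fin (m + 1) => y j)‖ ≤ C ^ (m + 1) * ⨆ j, |a j| := by
  classical
  cases isEmpty_or_nonempty ι
  · simp
  have hfirst (ε : Fin m → ι → Bool) : ‖∑ j, chainWeight a ε 0 j • y j‖ ≤ C * ⨆ j, |a j| := by
    simpa only [abs_chainWeight_zero] using hC (chainWeight a ε 0)
  have hrest (ε : Fin m → ι → Bool) (s : Fin m) : ‖∑ j, chainWeight a ε s.succ j • y j‖ ≤ C := by
    simpa only [abs_chainWeight_succ, ciSup_const, mul_one] using hC (chainWeight a ε s.succ)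
  have hterm (ε : Fin m → ι → Bool) :
      ‖tprod ℝ (fun t => ∑ j, chainWeight a ε t j • y j)‖ ≤ C ^ (m + 1) * ⨆ j, |a j| :=
    calc _ ≤ ∏ t, ‖∑ j, chainWeight a ε t j • y j‖ := projectiveSeminorm_tprod_le _
      _ = ‖∑ j, chainWeight a ε 0 j • y j‖ *
            ∏ s : Fin m, ‖∑ j, chainWeight a ε s.succ j • y j‖ := Fin.prod_univ_succ _
      _ ≤ (C * ⨆ j, |a j|) * ∏ _s : Fin m, C := by
        gcongr with s
        · exact (norm_nonneg _).trans (hfirst ε)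
        · exact hfirst ε
        · exact hrest ε s
      _ = C ^ (m + 1) * ⨆ j, |a j| := by simp [pow_succ]; ring
  set N : ℝ := 2 ^ (Fintype.card ι * m)
  have hN : 0 < N := by positivity
  have hcard : (Fintype.card (Fin m → ι → Bool) : ℝ) = N := by
    simp [N, ← pow_mul, mul_comm]
  rw [(eq_inv_smul_iff₀ hN.ne').2 (sum_tprod_chainWeight a y).symm, norm_smul, norm_inv,
    Real.norm_of_nonneg hN.le, inv_mul_le_iff₀ hN]
  calc _ ≤ ∑ ε : Fin m → ι → Bool, ‖tprod ℝ (fun t => ∑ j, chainWeight a ε t j • y j)‖ :=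
        norm_sum_le _ _
    _ ≤ ∑ _ε : Fin m → ι → Bool, C ^ (m + 1) * ⨆ j, |a j| := sum_le_sum fun ε _ => hterm ε
    _ = N * (C ^ (m + 1) * ⨆ j, |a j|) := by rw [sum_const, card_univ, nsmul_eq_mul, hcard]

theorem exists_dual_apply_eq_ite [Fintype ι] [DecidableEq ι] [SeminormedAddCommGroup X]
    [NormedSpace ℝ X] {y : ι → X} {c : ℝ} (hc : 0 < c)
    (hy : ∀ (b : ι → ℝ) (j : ι), c * |b j| ≤ ‖∑ i, b i • y i‖) (j : ι) :
    ∃ φ : StrongDual ℝ X, ‖φ‖ ≤ c⁻¹ ∧ ∀ i, φ (y i) = if i = j then 1 else 0 := by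
  have hli : LinearIndependent ℝ y := Fintype.linearIndependent_iff.2 fun b hb i =>
    abs_nonpos_iff.1 <| nonpos_of_mul_nonpos_right (by simpa [hb] using hy b i) hc
  set B := Module.Basis.span hli
  have hcoord (v : Submodule.span ℝ (Set.range y)) : ‖B.coord j v‖ ≤ c⁻¹ * ‖v‖ := by
    have hv : (v : X) = ∑ i, B.repr v i • y i := by
      conv_lhs => rw [← B.sum_repr v]
      simp [B]
    rw [Real.norm_eq_abs, le_inv_mul_iff₀ hc, B.coord_apply, ← Submodule.norm_coe, hv]
    exact hy (B.repr v) j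
  obtain ⟨φ, hφ, hnorm⟩ := exists_extension_norm_eq _ ((B.coord j).mkContinuous c⁻¹ hcoord)
  refine ⟨φ, hnorm ▸ LinearMap.mkContinuous_norm_le _ (inv_nonneg.2 hc.le) hcoord, fun i => ?_⟩
  have hyi : y i = (B i : X) := by simp [B]
  rw [hyi, hφ]
  simp [Finsupp.single_apply]

theorem abs_sum_mul_pow_le_norm [Fintype ι] [SeminormedAddCommGroup X] [NormedSpace ℝ X]
    (φ : StrongDual ℝ X) (y : ι → X) (a : ι → ℝ) (k : ℕ) :
    |∑ i, a i * φ (y i) ^ k| ≤ ‖φ‖ ^ k * ‖∑ i, a i • tprod ℝ (fun _ : Fin k => y i)‖ := by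
  set G := (ContinuousMultilinearMap.mkPiAlgebra ℝ (Fin k) ℝ).compContinuousLinearMap fun _ => φ
  have hG : ‖G‖ ≤ ‖φ‖ ^ k := by
    simpa using ContinuousMultilinearMap.norm_compContinuousLinearMap_le
      (ContinuousMultilinearMap.mkPiAlgebra ℝ (Fin k) ℝ) fun _ => φ
  have heval : lift G.toMultilinearMap (∑ i, a i • tprod ℝ (fun _ : Fin k => y i)) =
      ∑ i, a i * φ (y i) ^ k := by
    simp [G]
  calc _ = ‖lift G.toMultilinearMap (∑ i, a i • tprod ℝ (fun _ : Fin k => y i))‖ := by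
        rw [heval, Real.norm_eq_abs]
    _ ≤ ‖G‖ * _ := norm_eval_le_projectiveSeminorm _ _
    _ ≤ _ := by gcongr

theorem mul_iSup_abs_le_norm_sum_smul_tprod [Fintype ι] [SeminormedAddCommGroup X]
    [NormedSpace ℝ X] {y : ι → X} {c : ℝ} (hc : 0 < c)
    (hy : ∀ b : ι → ℝ, c * (⨆ j, |b j|) ≤ ‖∑ j, b j • y j‖) (m : ℕ) (a : ι → ℝ) :
    c ^ (m + 1) * (⨆ j, |a j|) ≤ ‖∑ j, a j • tprod ℝ (fun _ : Fin (m + 1) => y j)‖ := by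
  classical
  have hy' (b : ι → ℝ) (j : ι) : c * |b j| ≤ ‖∑ i, b i • y i‖ :=
    (mul_le_mul_of_nonneg_left (le_ciSup (Set.finite_range _).bddAbove j) hc.le).trans (hy b)
  rw [← le_div_iff₀' (by positivity)]
  refine Real.iSup_le (fun j => ?_) (by positivity)
  obtain ⟨φ, hφ, hφy⟩ := exists_dual_apply_eq_ite hc hy' j
  calc |a j| = |∑ i, a i * φ (y i) ^ (m + 1)| := by simp [hφy]
    _ ≤ ‖φ‖ ^ (m + 1) * _ := abs_sum_mul_pow_le_norm φ y a (m + 1)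
    _ ≤ c⁻¹ ^ (m + 1) * _ := by gcongr
    _ = _ := by rw [inv_pow, inv_mul_eq_div]

end Normed

theorem IsEquivC0Basis.exists_bounds_fin {X : Type*} [NormedAddCommGroup X] [NormedSpace ℝ X]
    {x : ℕ → X} (hx : IsEquivC0Basis x) :
    ∃ c C : ℝ, 0 < c ∧ c ≤ C ∧ ∀ (n : ℕ) (b : Fin n → ℝ),
      c * (⨆ j, |b j|) ≤ ‖∑ j, b j • x j‖ ∧ ‖∑ j, b j • x j‖ ≤ C * ⨆ j, |b j| := by
  obtain ⟨c, C, hc, hcC, h⟩ := hx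
  refine ⟨c, C, hc, hcC, fun n b => ?_⟩
  simpa [sum_range] using h n fun i => if hi : i < n then b ⟨i, hi⟩ else 0

open PiTensorProduct in
theorem diagonal_tensor_equiv_c0_basis_general {X : Type*}
    [NormedAddCommGroup X] [NormedSpace ℝ X]
    (k : ℕ) (hk : 1 ≤ k) (x : ℕ → X) (hx : IsEquivC0Basis x) :
    ∃ c C : ℝ, 0 < c ∧ c ≤ C ∧ ∀ (n : ℕ) (a : ℕ → ℝ),
      c * (⨆ i : Fin n, |a i|) ≤
        projectiveSeminorm (∑ i ∈ Finset.range n, a i • tprod ℝ (fun _ : Fin k => x i)) ∧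
      projectiveSeminorm (∑ i ∈ Finset.range n, a i • tprod ℝ (fun _ : Fin k => x i)) ≤
        C * (⨆ i : Fin n, |a i|) := by
  obtain ⟨c, C, hc, hcC, hbounds⟩ := hx.exists_bounds_fin
  obtain ⟨m, rfl⟩ : ∃ m, k = m + 1 := ⟨k - 1, by omega⟩
  refine ⟨c ^ (m + 1), C ^ (m + 1), pow_pos hc _, pow_le_pow_left₀ hc.le hcC _, fun n a => ?_⟩
  rw [sum_range fun i => a i • tprod ℝ fun _ : Fin (m + 1) => x i]
  exact ⟨mul_iSup_abs_le_norm_sum_smul_tprod hc (fun b => (hbounds n b).1) m fun j => a j,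
    norm_sum_smul_tprod_le (fun b => (hbounds n b).2) m fun j => a j⟩

open PiTensorProduct in
/-- The diagonal polynomial `γₖ : X → ⊗^k X` takes sequences equivalent to the `c₀`-basis to
sequences equivalent to the `c₀`-basis for the projective seminorm. -/
theorem diagonal_tensor_equiv_c0_basis {X : Type*}
    [NormedAddCommGroup X] [NormedSpace ℝ X] [CompleteSpace X]
    (k : ℕ) (hk : 1 ≤ k) (x : ℕ → X) (hx : IsEquivC0Basis x) :
    ∃ c C : ℝ, 0 < c ∧ c ≤ C ∧ ∀ (n : ℕ) (a : ℕ → ℝ),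
      c * (⨆ i : Fin n, |a i|) ≤
        projectiveSeminorm (∑ i ∈ Finset.range n, a i • tprod ℝ (fun _ : Fin k => x i)) ∧
      projectiveSeminorm (∑ i ∈ Finset.range n, a i • tprod ℝ (fun _ : Fin k => x i)) ≤
        C * (⨆ i : Fin n, |a i|) :=
  diagonal_tensor_equiv_c0_basis_general k hk x hx
end
end

section
/- Let X and Y be real Banach spaces, k ≥ 1 an integer and P : X → Y a continuous k-homogeneous polynomial. Suppose that for every sequence (xₙ) in X equivalent to the c₀-basis, the sequence (P(∑_{i=1}^n x_i))ₙ is not relatively compact in Y. Then P is an Orlicz–Pettis polynomial: for every real Banach space Z and every bounded linear operator T : Z → X, if the polynomial P∘T is unconditionally converging, then T is an unconditionally converging operator. -/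
open Filter Topology Metric

noncomputable section

/-! If `T` is not unconditionally converging, a w.u.C. series `∑ zₙ` in `Z` with `∑ T zₙ` not
summable can be grouped into consecutive blocks `w_k` with `‖T w_k‖ ≥ ε`, and `∑ T w_k` is again
w.u.C. By the Bessaga–Pełczyński selection principle some subsequence of `(T w_k)` is equivalent
to the `c₀`-basis: a w.u.C. series is weakly null with summable tails `∑ |ψ xₙ|`, so one can
choose inductively terms far from the span of the previous ones together with norm-one
functionals vanishing on that span. Since `P ∘ T` is unconditionally converging, `P` of the
partial sums of this subsequence converges, so their range is relatively compact. -/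

open Function

theorem summable_iff_forall_exists_norm_sum_lt {E : Type*} [NormedAddCommGroup E]
    [CompleteSpace E] {f : ℕ → E} :
    Summable f ↔ ∀ ε > 0, ∃ N, ∀ t : Finset ℕ, (∀ m ∈ t, N ≤ m) → ‖∑ m ∈ t, f m‖ < ε := by
  rw [summable_iff_vanishing_norm]
  refine forall₂_congr fun ε _ => ⟨fun ⟨s, hs⟩ => ⟨s.sup id + 1, fun t ht => hs t ?_⟩,
    fun ⟨N, hN⟩ => ⟨Finset.range N, fun t ht => hN t ?_⟩⟩
  · refine Finset.disjoint_left.mpr fun m hmt hms => ?_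
    have := Finset.le_sup (f := id) hms
    have := ht m hmt
    simp only [id] at *
    omega
  · exact fun m hm => not_lt.mp fun hlt =>
      Finset.disjoint_left.mp ht hm (Finset.mem_range.mpr hlt)

theorem exists_pairwise_disjoint_of_forall_exists_ge {p : Finset ℕ → Prop}
    (h : ∀ N, ∃ t, (∀ m ∈ t, N ≤ m) ∧ p t) :
    ∃ B : ℕ → Finset ℕ, (∀ k, p (B k)) ∧ Pairwise (Disjoint on B) := by
  obtain ⟨B, hBp, hBlt⟩ := exists_seq_of_forall_finset_exists p
    (fun t t' => ∀ m ∈ t, ∀ n ∈ t', m < n) fun s _ => by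
      obtain ⟨t, ht, hpt⟩ := h ((s.sup fun t => t.sup id) + 1)
      refine ⟨t, hpt, fun t' ht' m hm n hn => lt_of_lt_of_le ?_ (ht n hn)⟩
      exact Nat.lt_succ_of_le ((Finset.le_sup (f := id) hm).trans (Finset.le_sup ht'))
  refine ⟨B, hBp, fun k l hkl => Finset.disjoint_left.mpr fun m hk hl => ?_⟩
  rcases hkl.lt_or_gt with h | h
  · exact lt_irrefl m (hBlt k l h m hk m hl)
  · exact lt_irrefl m (hBlt l k h m hl m hk)

section NormedSpace

variable {X : Type*} [NormedAddCommGroup X] [NormedSpace ℝ X]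

theorem exists_norm_le_of_forall_dual_bounded {S : Set X}
    (hS : ∀ ψ : StrongDual ℝ X, ∃ C, ∀ v ∈ S, |ψ v| ≤ C) : ∃ C, ∀ v ∈ S, ‖v‖ ≤ C := by
  obtain ⟨C, hC⟩ := banach_steinhaus (g := fun v : S => NormedSpace.inclusionInDoubleDual ℝ X v)
    fun ψ => (hS ψ).imp fun C hC v => hC v v.2
  exact ⟨C, fun v hv =>
    (NormedSpace.inclusionInDoubleDualLi ℝ (E := X)).norm_map v ▸ hC ⟨v, hv⟩⟩

theorem exists_dual_vanishing_eq_infDist (F : Submodule ℝ X) (v : X) :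
    ∃ ψ : StrongDual ℝ X, ‖ψ‖ ≤ 1 ∧ (∀ u ∈ F, ψ u = 0) ∧ ψ v = infDist v F := by
  obtain ⟨g, hg, hgv⟩ := exists_dual_vector'' ℝ (Submodule.Quotient.mk v : X ⧸ F)
  refine ⟨g.comp F.mkQL, ?_, fun u hu => ?_, ?_⟩
  · refine ContinuousLinearMap.opNorm_le_bound _ zero_le_one fun u => ?_
    calc ‖g (F.mkQL u)‖ ≤ ‖g‖ * ‖(Submodule.Quotient.mk u : X ⧸ F)‖ := g.le_opNorm _
      _ ≤ 1 * ‖u‖ :=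
        mul_le_mul hg (Submodule.Quotient.norm_mk_le F u) (norm_nonneg _) zero_le_one
  · simp [(Submodule.Quotient.mk_eq_zero F).mpr hu]
  · exact hgv.trans (QuotientAddGroup.norm_mk (S := F.toAddSubgroup) v)

theorem norm_le_of_tendsto_of_forall_dual_tendsto_zero {x y : ℕ → X} {y₀ : X} {δ : ℝ}
    (hδ : 0 ≤ δ) (hy : Tendsto y atTop (𝓝 y₀))
    (hx : ∀ ψ : StrongDual ℝ X, Tendsto (fun n => ψ (x n)) atTop (𝓝 0))
    (hxy : ∀ n, ‖x n - y n‖ ≤ δ) : ‖y₀‖ ≤ δ := by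
  refine NormedSpace.norm_le_dual_bound ℝ y₀ hδ fun ψ => ?_
  have hlim : Tendsto (fun n => ψ (y n - x n)) atTop (𝓝 (ψ y₀)) := by
    simpa only [map_sub, sub_zero, comp_apply] using
      ((ψ.continuous.tendsto y₀).comp hy).sub (hx ψ)
  refine le_of_tendsto' hlim.norm fun n => ?_
  calc ‖ψ (y n - x n)‖ ≤ ‖ψ‖ * ‖x n - y n‖ := norm_sub_rev (x n) (y n) ▸ ψ.le_opNorm _
    _ ≤ δ * ‖ψ‖ := by rw [mul_comm]; exact mul_le_mul_of_nonneg_right (hxy n) (norm_nonneg ψ)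

theorem exists_le_infDist_of_forall_dual_tendsto_zero {x : ℕ → X} {C ε : ℝ}
    (hC : ∀ n, ‖x n‖ ≤ C) (hx : ∀ ψ : StrongDual ℝ X, Tendsto (fun n => ψ (x n)) atTop (𝓝 0))
    (hε : ∀ n, ε ≤ ‖x n‖) (F : Submodule ℝ X) [FiniteDimensional ℝ F] :
    ∃ n, ε / 3 ≤ infDist (x n) F := by
  by_contra! hclose
  choose f hfF hf using fun n => (infDist_lt_iff ⟨0, F.zero_mem⟩).mp (hclose n)
  have hε3 : 0 < ε / 3 := dist_nonneg.trans_lt (hf 0)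
  let f' : ℕ → F := fun n => ⟨f n, hfF n⟩
  have hbdd : Bornology.IsBounded (Set.range f') := by
    refine isBounded_iff_forall_norm_le.mpr ⟨C + ε / 3, ?_⟩
    rintro _ ⟨n, rfl⟩
    calc ‖(f n : X)‖ ≤ ‖x n‖ + dist (x n) (f n) := by
          rw [dist_comm, dist_eq_norm]; exact norm_le_norm_add_norm_sub' _ _
      _ ≤ C + ε / 3 := add_le_add (hC n) (hf n).le
  obtain ⟨y₀, -, φ, hφ, hlim⟩ := tendsto_subseq_of_bounded hbdd fun n => ⟨n, rfl⟩
  have hlimX : Tendsto (fun k => f (φ k)) atTop (𝓝 (y₀ : X)) :=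
    (continuous_subtype_val.tendsto y₀).comp hlim
  -- `y₀` is small because `x` is weakly null, so the `x (φ k)` close to it cannot have norm `ε`.
  have hy₀ : ‖(y₀ : X)‖ ≤ ε / 3 :=
    norm_le_of_tendsto_of_forall_dual_tendsto_zero hε3.le hlimX
      (fun ψ => (hx ψ).comp hφ.tendsto_atTop) fun k => by
        simpa only [dist_eq_norm] using (hf (φ k)).le
  obtain ⟨K, hK⟩ := Metric.tendsto_atTop.mp hlimX (ε / 3) hε3
  have hfy₀ : ‖f (φ K) - y₀‖ < ε / 3 := by simpa only [dist_eq_norm] using hK K le_rfl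
  have hxf : ‖x (φ K) - f (φ K)‖ < ε / 3 := by simpa only [dist_eq_norm] using hf (φ K)
  have htri : ‖x (φ K)‖ ≤ ‖x (φ K) - f (φ K)‖ + ‖f (φ K) - y₀‖ + ‖(y₀ : X)‖ := by
    simpa only [sub_add_sub_cancel, sub_add_cancel] using
      norm_add₃_le (a := x (φ K) - f (φ K)) (b := f (φ K) - y₀) (c := (y₀ : X))
  linarith [hε (φ K)]

theorem abs_mul_le_norm_sum_smul_of_dual_system {y : ℕ → X} {ψ : ℕ → StrongDual ℝ X} {d t : ℝ}
    (hψ : ∀ j, ‖ψ j‖ ≤ 1) (hdiag : ∀ j, d ≤ ψ j (y j)) (hbelow : ∀ i j, i < j → ψ j (y i) = 0)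
    (habove : ∀ j (s : Finset ℕ), (∀ i ∈ s, j < i) → ∑ i ∈ s, |ψ j (y i)| ≤ t)
    {n j : ℕ} (hj : j < n) (a : ℕ → ℝ) (hmax : ∀ i ∈ Finset.range n, |a i| ≤ |a j|) :
    (d - t) * |a j| ≤ ‖∑ i ∈ Finset.range n, a i • y i‖ := by
  set v := ∑ i ∈ Finset.range n, a i • y i
  have hsplit : ψ j v = a j * ψ j (y j) + ∑ i ∈ Finset.Ico (j + 1) n, a i * ψ j (y i) := by
    have hhead : ∑ i ∈ Finset.range j, a i * ψ j (y i) = 0 :=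
      Finset.sum_eq_zero fun i hi => by rw [hbelow i j (Finset.mem_range.mp hi), mul_zero]
    simp only [v, map_sum, map_smul, smul_eq_mul, Finset.range_eq_Ico]
    rw [← Finset.sum_Ico_consecutive _ (Nat.zero_le j) hj.le, ← Finset.range_eq_Ico, hhead,
      zero_add, Finset.sum_eq_sum_Ico_succ_bot hj]
  have htail : |∑ i ∈ Finset.Ico (j + 1) n, a i * ψ j (y i)| ≤ |a j| * t :=
    calc |∑ i ∈ Finset.Ico (j + 1) n, a i * ψ j (y i)|
        ≤ ∑ i ∈ Finset.Ico (j + 1) n, |a j| * |ψ j (y i)| := by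
          refine (Finset.abs_sum_le_sum_abs _ _).trans (Finset.sum_le_sum fun i hi => ?_)
          rw [abs_mul]
          refine mul_le_mul_of_nonneg_right (hmax i ?_) (abs_nonneg _)
          exact Finset.mem_range.mpr (Finset.mem_Ico.mp hi).2
      _ ≤ |a j| * t := by
          rw [← Finset.mul_sum]
          exact mul_le_mul_of_nonneg_left
            (habove j _ fun i hi => (Finset.mem_Ico.mp hi).1) (abs_nonneg _)
  have hdiag' : |a j| * d ≤ |a j * ψ j (y j)| := by
    rw [abs_mul]
    exact mul_le_mul_of_nonneg_left ((hdiag j).trans (le_abs_self _)) (abs_nonneg _)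
  have hψv : |ψ j v| ≤ ‖v‖ := by
    simpa using (ψ j).le_opNorm v |>.trans (mul_le_of_le_one_left (norm_nonneg v) (hψ j))
  have hrev := abs_sub_abs_le_abs_sub (a j * ψ j (y j))
    (-∑ i ∈ Finset.Ico (j + 1) n, a i * ψ j (y i))
  rw [abs_neg, sub_neg_eq_add, ← hsplit] at hrev
  linarith

theorem isEquivC0Basis_of_bounds {y : ℕ → X} {c C : ℝ} (hc : 0 < c) (hcC : c ≤ C)
    (hlow : ∀ n j (a : ℕ → ℝ), j < n → (∀ i ∈ Finset.range n, |a i| ≤ |a j|) →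
      c * |a j| ≤ ‖∑ i ∈ Finset.range n, a i • y i‖)
    (hup : ∀ n (a : ℕ → ℝ) M, 0 ≤ M → (∀ i ∈ Finset.range n, |a i| ≤ M) →
      ‖∑ i ∈ Finset.range n, a i • y i‖ ≤ C * M) :
    IsEquivC0Basis y := by
  refine ⟨c, C, hc, hcC, fun n a => ?_⟩
  rcases n.eq_zero_or_pos with rfl | hn
  · simp [Real.iSup_of_isEmpty]
  have : Nonempty (Fin n) := Fin.pos_iff_nonempty.mp hn
  obtain ⟨j, hj⟩ := Finite.exists_max fun i : Fin n => |a i|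
  have hmax : ∀ i ∈ Finset.range n, |a i| ≤ |a j| := fun i hi => hj ⟨i, Finset.mem_range.mp hi⟩
  have hsup : (⨆ i : Fin n, |a i|) = |a j| :=
    le_antisymm (ciSup_le hj)
      (le_ciSup (f := fun i : Fin n => |a i|) (Set.finite_range _).bddAbove j)
  rw [hsup]
  exact ⟨hlow n j a j.2 hmax, hup n a _ (abs_nonneg _) hmax⟩

end NormedSpace

namespace WUC

variable {X : Type*} [NormedAddCommGroup X] [NormedSpace ℝ X] {x : ℕ → X}

theorem comp_injective (hx : WUC x) {σ : ℕ → ℕ} (hσ : σ.Injective) : WUC (x ∘ σ) :=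
  fun φ => (hx φ).comp_injective hσ

theorem map_s5 {Y : Type*} [NormedAddCommGroup Y] [NormedSpace ℝ Y] (hx : WUC x)
    (T : X →L[ℝ] Y) : WUC (T ∘ x) :=
  fun φ => hx (φ.comp T)

theorem tendsto_zero (hx : WUC x) (ψ : StrongDual ℝ X) :
    Tendsto (fun n => ψ (x n)) atTop (𝓝 0) :=
  (summable_abs_iff.mp (hx ψ)).tendsto_atTop_zero

theorem sum_abs_le_tsum (hx : WUC x) (ψ : StrongDual ℝ X) (s : Finset ℕ) :
    ∑ i ∈ s, |ψ (x i)| ≤ ∑' n, |ψ (x n)| :=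
  (hx ψ).sum_le_tsum s fun _ _ => abs_nonneg _

theorem sum_blocks (hx : WUC x) {B : ℕ → Finset ℕ} (hB : Pairwise (Disjoint on B)) :
    WUC fun k => ∑ n ∈ B k, x n := by
  intro φ
  refine Summable.of_nonneg_of_le (fun k => abs_nonneg _)
    (fun k => by simpa only [map_sum] using Finset.abs_sum_le_sum_abs _ _)
    (summable_of_sum_range_le (c := ∑' n, |φ (x n)|)
      (fun k => Finset.sum_nonneg fun _ _ => abs_nonneg _) fun K => ?_)
  rw [← Finset.sum_biUnion fun k _ l _ hkl => hB hkl]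
  exact hx.sum_abs_le_tsum φ _

theorem exists_norm_sum_smul_le (hx : WUC x) :
    ∃ C, ∀ (s : Finset ℕ) (a : ℕ → ℝ) (M : ℝ), 0 ≤ M → (∀ i ∈ s, |a i| ≤ M) →
      ‖∑ i ∈ s, a i • x i‖ ≤ C * M := by
  obtain ⟨C, hC⟩ := exists_norm_le_of_forall_dual_bounded
    (S := {v | ∃ (s : Finset ℕ) (a : ℕ → ℝ), (∀ i ∈ s, |a i| ≤ 1) ∧ v = ∑ i ∈ s, a i • x i})
    fun ψ => ⟨∑' n, |ψ (x n)|, by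
      rintro _ ⟨s, a, ha, rfl⟩
      calc |ψ (∑ i ∈ s, a i • x i)| ≤ ∑ i ∈ s, |a i * ψ (x i)| := by
            simpa only [map_sum, map_smul, smul_eq_mul] using Finset.abs_sum_le_sum_abs _ _
        _ ≤ ∑ i ∈ s, |ψ (x i)| := Finset.sum_le_sum fun i hi => by
            rw [abs_mul]; exact mul_le_of_le_one_left (abs_nonneg _) (ha i hi)
        _ ≤ ∑' n, |ψ (x n)| := hx.sum_abs_le_tsum ψ s⟩
  refine ⟨C, fun s a M hM ha => ?_⟩
  rcases hM.eq_or_lt with rfl | hM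
  · have : ∀ i ∈ s, a i • x i = 0 := fun i hi => by
      rw [abs_nonpos_iff.mp (ha i hi), zero_smul]
    simp [Finset.sum_eq_zero this]
  · have hbound := hC _ ⟨s, fun i => a i / M, fun i hi => by
      rw [abs_div, abs_of_pos hM, div_le_one hM]; exact ha i hi, rfl⟩
    have hscale : ∑ i ∈ s, a i • x i = M • ∑ i ∈ s, (a i / M) • x i := by
      simp only [Finset.smul_sum, smul_smul, mul_div_cancel₀ _ hM.ne']
    rw [hscale, norm_smul, Real.norm_of_nonneg hM.le, mul_comm]
    exact mul_le_mul_of_nonneg_right hbound hM.le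

theorem exists_norm_le (hx : WUC x) : ∃ C, ∀ n, ‖x n‖ ≤ C := by
  obtain ⟨C, hC⟩ := hx.exists_norm_sum_smul_le
  exact ⟨C, fun n => by simpa using hC {n} 1 1 zero_le_one (by simp)⟩

theorem exists_dual_vanishing_ge (hx : WUC x) {ε : ℝ} (hε : ∀ n, ε ≤ ‖x n‖)
    (I : Finset ℕ) (N : ℕ) :
    ∃ j, N ≤ j ∧ ∃ ψ : StrongDual ℝ X, ‖ψ‖ ≤ 1 ∧ (∀ i ∈ I, ψ (x i) = 0) ∧ ε / 3 ≤ ψ (x j) := by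
  obtain ⟨C, hC⟩ := hx.exists_norm_le
  let F := Submodule.span ℝ (x '' I)
  have : FiniteDimensional ℝ F := FiniteDimensional.span_of_finite ℝ (I.finite_toSet.image x)
  obtain ⟨n, hn⟩ := exists_le_infDist_of_forall_dual_tendsto_zero (x := fun n => x (n + N))
    (fun n => hC _) (fun ψ => (hx.tendsto_zero ψ).comp (tendsto_add_atTop_nat N))
    (fun n => hε _) F
  obtain ⟨ψ, hψ, hψF, hψv⟩ := exists_dual_vanishing_eq_infDist F (x (n + N))
  exact ⟨n + N, Nat.le_add_left N n, ψ, hψ,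
    fun i hi => hψF _ (Submodule.subset_span (Set.mem_image_of_mem x hi)), hψv ▸ hn⟩

theorem exists_dual_system (hx : WUC x) {ε : ℝ} (hε₀ : 0 < ε) (hε : ∀ n, ε ≤ ‖x n‖) :
    ∃ σ : ℕ → ℕ, StrictMono σ ∧ ∃ ψ : ℕ → StrongDual ℝ X, (∀ j, ‖ψ j‖ ≤ 1) ∧
      (∀ j, ε / 3 ≤ ψ j (x (σ j))) ∧ (∀ i j, i < j → ψ j (x (σ i)) = 0) ∧
      ∀ j (s : Finset ℕ), (∀ i ∈ s, j < i) → ∑ i ∈ s, |ψ j (x (σ i))| ≤ ε / 12 := by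
  have htail (ψ : StrongDual ℝ X) : ∃ N, ∀ t : Finset ℕ, (∀ m ∈ t, N ≤ m) →
      ∑ m ∈ t, |ψ (x m)| ≤ ε / 12 := by
    obtain ⟨N, hN⟩ := summable_iff_forall_exists_norm_sum_lt.mp (hx ψ) (ε / 12) (by positivity)
    refine ⟨N, fun t ht => ?_⟩
    have := hN t ht
    rw [Real.norm_of_nonneg (Finset.sum_nonneg fun _ _ => abs_nonneg _)] at this
    exact this.le
  choose Ntail hNtail using htail
  obtain ⟨f, hfP, hfr⟩ := exists_seq_of_forall_finset_exists
    (fun p : ℕ × StrongDual ℝ X => ‖p.2‖ ≤ 1 ∧ ε / 3 ≤ p.2 (x p.1))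
    (fun p q => p.1 < q.1 ∧ q.2 (x p.1) = 0 ∧
      ∀ t : Finset ℕ, (∀ m ∈ t, q.1 ≤ m) → ∑ m ∈ t, |p.2 (x m)| ≤ ε / 12)
    fun s _ => by
      obtain ⟨j, hj, ψ, hψ, hψ0, hψj⟩ := hx.exists_dual_vanishing_ge hε (s.image Prod.fst)
        (max (s.sup Prod.fst + 1) (s.sup fun p => Ntail p.2))
      refine ⟨(j, ψ), ⟨hψ, hψj⟩, fun p hp => ⟨?_, hψ0 _ (Finset.mem_image_of_mem _ hp),
        fun t ht => hNtail _ t fun m hm => le_trans ?_ (ht m hm)⟩⟩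
      · exact (Nat.lt_succ_of_le (Finset.le_sup (f := Prod.fst) hp)).trans_le
          ((le_max_left _ _).trans hj)
      · exact (Finset.le_sup (f := fun p => Ntail p.2) hp).trans ((le_max_right _ _).trans hj)
  have hσ : StrictMono fun n => (f n).1 := fun m n h => (hfr m n h).1
  refine ⟨fun n => (f n).1, hσ, fun n => (f n).2, fun j => (hfP j).1, fun j => (hfP j).2,
    fun i j h => (hfr i j h).2.1, fun j s hs => ?_⟩
  rw [← Finset.sum_image (f := fun m => |(f j).2 (x m)|) hσ.injective.injOn]
  refine (hfr j (j + 1) j.lt_succ_self).2.2 _ fun m hm => ?_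
  obtain ⟨i, hi, rfl⟩ := Finset.mem_image.mp hm
  exact hσ.monotone (hs i hi)

theorem exists_strictMono_isEquivC0Basis (hx : WUC x) {ε : ℝ} (hε₀ : 0 < ε)
    (hε : ∀ n, ε ≤ ‖x n‖) : ∃ σ : ℕ → ℕ, StrictMono σ ∧ IsEquivC0Basis (x ∘ σ) := by
  obtain ⟨σ, hσ, ψ, hψ, hdiag, hbelow, habove⟩ := hx.exists_dual_system hε₀ hε
  obtain ⟨C, hC⟩ := (hx.comp_injective hσ.injective).exists_norm_sum_smul_le
  refine ⟨σ, hσ, isEquivC0Basis_of_bounds (c := ε / 4) (C := max C (ε / 4)) (by positivity)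
    (le_max_right _ _) (fun n j a hj hmax => ?_) fun n a M hM ha => ?_⟩
  · convert abs_mul_le_norm_sum_smul_of_dual_system (y := x ∘ σ) hψ hdiag hbelow habove hj a
      hmax using 1
    ring
  · exact (hC _ a M hM ha).trans (mul_le_mul_of_nonneg_right (le_max_left _ _) hM)

theorem exists_blocks_of_not_summable {Z : Type*} [NormedAddCommGroup Z] [NormedSpace ℝ Z]
    [CompleteSpace X] {z : ℕ → Z} (hz : WUC z) (T : Z →L[ℝ] X)
    (hT : ¬ Summable fun n => T (z n)) :
    ∃ w : ℕ → Z, WUC w ∧ ∃ ε > 0, ∀ k, ε ≤ ‖T (w k)‖ := by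
  simp only [summable_iff_forall_exists_norm_sum_lt, not_forall, not_exists, not_lt] at hT
  obtain ⟨ε, hε, hbig⟩ := hT
  obtain ⟨B, hB, hdisj⟩ := exists_pairwise_disjoint_of_forall_exists_ge
    (p := fun t => ε ≤ ‖∑ n ∈ t, T (z n)‖) fun N => by simpa using hbig N
  exact ⟨fun k => ∑ n ∈ B k, z n, hz.sum_blocks hdisj, ε, hε, fun k => by simpa using hB k⟩

end WUC

theorem orlicz_pettis_of_partial_sums_not_relcompact_general {X : Type u} {Y : Type v}
    [NormedAddCommGroup X] [NormedSpace ℝ X] [CompleteSpace X]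
    [NormedAddCommGroup Y] [NormedSpace ℝ Y]
    (P : X → Y)
    (hD : ∀ x : ℕ → X, IsEquivC0Basis x →
      ¬ IsCompact (closure (Set.range fun n => P (∑ i ∈ Finset.range n, x i)))) :
    ∀ (Z : Type w) [NormedAddCommGroup Z] [NormedSpace ℝ Z] [CompleteSpace Z]
      (T : Z →L[ℝ] X), UCPoly (fun z => P (T z)) → UCOp ⇑T := by
  intro Z _ _ _ T hPT z hz
  by_contra hT
  obtain ⟨w, hw, ε, hε, hTw⟩ := hz.exists_blocks_of_not_summable T hT
  obtain ⟨σ, hσ, hc₀⟩ := (hw.map_s5 T).exists_strictMono_isEquivC0Basis hε hTw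
  obtain ⟨L, hL⟩ := hPT _ (hw.comp_injective hσ.injective)
  simp only [map_sum] at hL
  exact hD _ hc₀ (hL.isCompact_insert_range.closure_of_subset (Set.subset_insert _ _))

/-- Condition (D) implies that `P` is an Orlicz–Pettis polynomial. -/
theorem orlicz_pettis_of_partial_sums_not_relcompact {X : Type u} {Y : Type v}
    [NormedAddCommGroup X] [NormedSpace ℝ X] [CompleteSpace X]
    [NormedAddCommGroup Y] [NormedSpace ℝ Y] [CompleteSpace Y]
    (k : ℕ) (hk : 1 ≤ k) (A : ContinuousMultilinearMap ℝ (fun _ : Fin k => X) Y)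
    (P : X → Y) (hP : P = fun x => A fun _ => x)
    (hD : ∀ x : ℕ → X, IsEquivC0Basis x →
      ¬ IsCompact (closure (Set.range fun n => P (∑ i ∈ Finset.range n, x i)))) :
    ∀ (Z : Type w) [NormedAddCommGroup Z] [NormedSpace ℝ Z] [CompleteSpace Z]
      (T : Z →L[ℝ] X), UCPoly (fun z => P (T z)) → UCOp ⇑T :=
  orlicz_pettis_of_partial_sums_not_relcompact_general P hD
end
end

section
/- There exists a continuous 2-homogeneous polynomial P : c₀ → c₀ such that P(eₙ) = 0 for every n ∈ ℕ, and yet for every sequence (xₙ) in c₀ equivalent to the c₀-basis, the sequence of values (P(∑_{i=1}^n x_i))ₙ is not relatively compact in c₀ (it has no norm-convergent subsequence). -/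
/-!
The polynomial is `P(u)ₖ = u(pₖ) u(qₖ)`, where `k ↦ (pₖ, qₖ)` enumerates the pairs `p < q`; it
vanishes on the unit vectors since `pₖ ≠ qₖ`.

Let `c max |aᵢ| ≤ ‖∑ aᵢ xᵢ‖ ≤ C max |aᵢ|`. The partial sums `Sₙ` are bounded by `C` and converge
coordinatewise to some `t`, since `∑ᵢ |xᵢ(j)| ≤ C`. The limit `t` has infinitely many coordinates
with `|t j| > c/8`. Otherwise, outside a finite set `K` of coordinates every `Sₙ` is eventually
small, so along a subsequence `S_{σ l}` each coordinate outside `K` is large for at most one `l`,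
while on `K` the `S_{σ l}` are already close to `t`. Then the average
`r⁻¹ ∑_{l<r} (S_{σ(r+l)} - S_{σ l})` has norm at most `3c/4` for `r > 4C/c`; but it is
`∑ aᵢ xᵢ` with `aᵢ = 1` at `i = σ(r-1)`, so the lower estimate makes its norm at least `c`.

Hence there are `Sₙ` that are large at two coordinates `p < q` as far out as we like. Choosing
them beyond the point where the previously chosen `Sₘ` are small, the values `P(Sₙ)` are large at
the index of `(p, q)` where the earlier values are small: they form a uniformly separated sequence.
-/

open Filter Topology Metric

noncomputable section

open Finset ZeroAtInfty

namespace ZeroAtInftyContinuousMap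

variable {α β : Type*} [TopologicalSpace α]

theorem norm_apply_le_norm [SeminormedAddCommGroup β] (f : C₀(α, β)) (a : α) :
    ‖f a‖ ≤ ‖f‖ :=
  f.toBCF.norm_coe_le_norm a

theorem norm_le_of_forall_norm_apply_le [SeminormedAddCommGroup β] {f : C₀(α, β)} {b : ℝ}
    (hb : 0 ≤ b) (h : ∀ a, ‖f a‖ ≤ b) : ‖f‖ ≤ b :=
  (BoundedContinuousFunction.norm_le hb).2 h

theorem abs_apply_le_norm (f : C₀(α, ℝ)) (a : α) : |f a| ≤ ‖f‖ :=
  f.norm_apply_le_norm a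

theorem sum_apply [AddCommMonoid β] [TopologicalSpace β] [ContinuousAdd β] {ι : Type*}
    (s : Finset ι) (f : ι → C₀(α, β)) (a : α) : (∑ i ∈ s, f i) a = ∑ i ∈ s, f i a :=
  map_sum (⟨⟨fun g => g a, rfl⟩, fun _ _ => rfl⟩ : C₀(α, β) →+ β) f s

theorem tendsto_atTop_nat [TopologicalSpace β] [Zero β] (f : C₀(ℕ, β)) :
    Tendsto f atTop (𝓝 0) := by
  simpa [cocompact_eq_cofinite, Nat.cofinite_eq_atTop] using f.zero_at_infty'

theorem finite_setOf_le_norm_apply [SeminormedAddCommGroup β] (f : C₀(ℕ, β)) {ε : ℝ}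
    (hε : 0 < ε) : {a | ε ≤ ‖f a‖}.Finite := by
  obtain ⟨N, hN⟩ := eventually_atTop.1
    (f.tendsto_atTop_nat.norm.eventually_lt_const (by simpa using hε))
  exact (Set.finite_Iio N).subset fun a ha => lt_of_not_ge fun h => (hN a h).not_ge ha

end ZeroAtInftyContinuousMap

theorem abs_sum_range_sub_le (s : ℕ → ℝ) (r : ℕ) :
    |∑ l ∈ range r, (s (r + l) - s l)| ≤ ∑ l ∈ range (2 * r), |s l| := by
  rw [two_mul, Finset.sum_range_add, add_comm, ← Finset.sum_add_distrib]
  exact (Finset.abs_sum_le_sum_abs _ _).trans (Finset.sum_le_sum fun l _ => abs_sub _ _)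

theorem abs_sum_range_sub_le_of_abs_sub_le {s : ℕ → ℝ} {t ρ : ℝ} (h : ∀ l, |s l - t| ≤ ρ)
    (r : ℕ) : |∑ l ∈ range r, (s (r + l) - s l)| ≤ r * (2 * ρ) := by
  refine (Finset.abs_sum_le_sum_abs _ _).trans ?_
  simpa [two_mul, mul_add] using Finset.sum_le_sum fun l (_ : l ∈ range r) =>
    (abs_sub_le (s (r + l)) t (s l)).trans
      (add_le_add (h _) ((abs_sub_comm t _).trans_le (h l)))

theorem sum_range_abs_le_of_large_once {s : ℕ → ℝ} {η C : ℝ} (hη : 0 ≤ η)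
    (hC : ∀ l, |s l| ≤ C) (hlarge : ∀ l l', l < l' → η ≤ |s l| → |s l'| < η) (n : ℕ) :
    ∑ l ∈ range n, |s l| ≤ n * η + C := by
  classical
  rw [← Finset.sum_filter_add_sum_filter_not _ (fun l => η ≤ |s l|), add_comm]
  have hcard : #{l ∈ range n | η ≤ |s l|} ≤ 1 := Finset.card_le_one.2 fun l hl l' hl' => by
    simp only [Finset.mem_filter] at hl hl'
    by_contra hne
    rcases lt_or_gt_of_ne hne with h | h
    · exact (hlarge l l' h hl.2).not_ge hl'.2
    · exact (hlarge l' l h hl'.2).not_ge hl.2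
  gcongr
  · calc ∑ l ∈ range n with ¬η ≤ |s l|, |s l| ≤ #{l ∈ range n | ¬η ≤ |s l|} • η :=
          Finset.sum_le_card_nsmul _ _ _ fun l hl => (not_le.1 (Finset.mem_filter.1 hl).2).le
      _ ≤ n * η := by
          rw [nsmul_eq_mul]; gcongr; simpa using Finset.card_filter_le (range n) _
  · calc ∑ l ∈ range n with η ≤ |s l|, |s l| ≤ #{l ∈ range n | η ≤ |s l|} • C :=
          Finset.sum_le_card_nsmul _ _ _ fun l _ => hC l
      _ ≤ 1 • C := by gcongr; exact (abs_nonneg _).trans (hC 0)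
      _ = C := one_smul _ _

theorem sum_range_card_smul_eq_sum_Ico {M : Type*} [AddCommMonoid M] (x : ℕ → M)
    (L : Finset ℕ) (u v : ℕ → ℕ) {n : ℕ} (hv : ∀ l ∈ L, v l ≤ n) :
    ∑ i ∈ range n, #{l ∈ L | u l ≤ i ∧ i < v l} • x i =
      ∑ l ∈ L, ∑ i ∈ Ico (u l) (v l), x i := by
  simp_rw [Finset.card_filter, Finset.sum_smul, ite_smul, one_smul, zero_smul]
  rw [Finset.sum_comm]
  refine Finset.sum_congr rfl fun l hl => ?_
  rw [← Finset.sum_filter]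
  congr 1
  ext i
  simp only [Finset.mem_filter, Finset.mem_range, Finset.mem_Ico]
  have := hv l hl
  omega

theorem exists_strictMono_forall_lt_of_eventually {Q : ℕ → Prop} {P : ℕ → ℕ → Prop}
    (hQ : ∀ᶠ n in atTop, Q n) (hP : ∀ m, ∀ᶠ n in atTop, P m n) :
    ∃ σ : ℕ → ℕ, StrictMono σ ∧ (∀ l, Q (σ l)) ∧ ∀ l' l, l' < l → P (σ l') (σ l) := by
  have h : ∀ m, ∀ᶠ n in atTop, Q n ∧ ∀ m' ≤ m, P m' n := fun m =>
    hQ.and ((Set.finite_Iic m).eventually_all.2 fun m' _ => hP m')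
  choose N hN using fun m => eventually_atTop.1 (h m)
  let σ : ℕ → ℕ := fun l => Nat.rec (N 0) (fun _ s => max (s + 1) (N s)) l
  have hσ_succ : ∀ l, σ (l + 1) = max (σ l + 1) (N (σ l)) := fun _ => rfl
  have hσ : StrictMono σ := strictMono_nat_of_lt_succ fun l => by rw [hσ_succ]; omega
  have hN_le : ∀ l, N (σ l) ≤ σ (l + 1) := fun l => by rw [hσ_succ]; omega
  refine ⟨σ, hσ, fun l => ?_, fun l' l hl => ?_⟩
  · cases l with
    | zero => exact (hN 0 (N 0) le_rfl).1
    | succ l => exact (hN _ _ (hN_le l)).1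
  · obtain ⟨l, rfl⟩ : ∃ l₀, l = l₀ + 1 := ⟨l - 1, by omega⟩
    exact (hN _ _ (hN_le l)).2 _ (hσ.monotone (by omega))

theorem not_isCompact_of_forall_lt_le_dist {Y : Type*} [PseudoMetricSpace Y] {s : Set Y}
    {u : ℕ → Y} (hu : ∀ n, u n ∈ s) {ε : ℝ} (hε : 0 < ε)
    (h : ∀ m n, m < n → ε ≤ dist (u m) (u n)) : ¬IsCompact s := fun hs => by
  obtain ⟨a, -, φ, hφ, hlim⟩ := hs.tendsto_subseq hu
  obtain ⟨N, hN⟩ := Metric.cauchySeq_iff'.1 hlim.cauchySeq ε hε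
  exact (h _ _ (hφ N.lt_succ_self)).not_gt (dist_comm (u (φ N)) _ ▸ hN (N + 1) N.le_succ)

def pairFst (k : ℕ) : ℕ := k.unpair.1

def pairSnd (k : ℕ) : ℕ := k.unpair.1 + k.unpair.2 + 1

theorem pairFst_lt_pairSnd (k : ℕ) : pairFst k < pairSnd k := by
  unfold pairFst pairSnd; omega

theorem exists_pairFst_eq_pairSnd_eq {p q : ℕ} (h : p < q) :
    ∃ k, pairFst k = p ∧ pairSnd k = q :=
  ⟨Nat.pair p (q - p - 1), by simp only [pairFst, pairSnd, Nat.unpair_pair, true_and]; omega⟩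

theorem tendsto_pairSnd_atTop : Tendsto pairSnd atTop atTop := by
  refine tendsto_atTop_atTop.2 fun b => ⟨b ^ 2, fun k hk => ?_⟩
  have hk' : k < (pairSnd k) ^ 2 := by
    calc k = Nat.pair k.unpair.1 k.unpair.2 := (Nat.pair_unpair k).symm
      _ < (max k.unpair.1 k.unpair.2 + 1) ^ 2 := Nat.pair_lt_max_add_one_sq _ _
      _ ≤ (pairSnd k) ^ 2 := by unfold pairSnd; gcongr; omega
  exact (Nat.pow_lt_pow_iff_left two_ne_zero).1 (hk.trans_lt hk') |>.le

def pairProd (u v : c0) : c0 where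
  toFun k := u (pairFst k) * v (pairSnd k)
  continuous_toFun := continuous_of_discreteTopology
  zero_at_infty' := by
    rw [cocompact_eq_cofinite, Nat.cofinite_eq_atTop]
    exact isBoundedUnder_le_mul_tendsto_zero
      (isBoundedUnder_of ⟨‖u‖, fun k => u.norm_apply_le_norm (pairFst k)⟩)
      (v.tendsto_atTop_nat.comp tendsto_pairSnd_atTop)

@[simp]
theorem pairProd_apply (u v : c0) (k : ℕ) : pairProd u v k = u (pairFst k) * v (pairSnd k) :=
  rfl

theorem norm_pairProd_le (u v : c0) : ‖pairProd u v‖ ≤ ‖u‖ * ‖v‖ :=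
  ZeroAtInftyContinuousMap.norm_le_of_forall_norm_apply_le (by positivity) fun k => by
    rw [pairProd_apply, norm_mul]
    exact mul_le_mul (u.norm_apply_le_norm _) (v.norm_apply_le_norm _) (norm_nonneg _)
      (norm_nonneg _)

def pairPoly : ContinuousMultilinearMap ℝ (fun _ : Fin 2 => c0) c0 :=
  MultilinearMap.mkContinuous
    { toFun := fun m => pairProd (m 0) (m 1)
      map_update_add' := fun m i a b => by
        ext k
        fin_cases i <;> simp [Function.update] <;> ring
      map_update_smul' := fun m i r a => by
        ext k
        fin_cases i <;> simp [Function.update] <;> ring }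
    1 fun m => by simpa [Fin.prod_univ_two] using norm_pairProd_le (m 0) (m 1)

theorem pairPoly_apply (m : Fin 2 → c0) (k : ℕ) :
    pairPoly m k = m 0 (pairFst k) * m 1 (pairSnd k) :=
  rfl

theorem pairPoly_basis (n : ℕ) : (pairPoly fun _ => e n) = 0 := by
  ext k
  simp only [pairPoly_apply, e, ZeroAtInftyContinuousMap.coe_mk, mul_eq_zero, ite_eq_right_iff,
    one_ne_zero, imp_false, ZeroAtInftyContinuousMap.zero_apply]
  have := pairFst_lt_pairSnd k
  omega

theorem sq_div_two_le_dist_pairPoly {u v : c0} {k : ℕ} {δ : ℝ} (hδ : 0 ≤ δ)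
    (hu₁ : δ < |u (pairFst k)|) (hu₂ : δ < |u (pairSnd k)|)
    (hv₁ : |v (pairFst k)| ≤ δ / 2) (hv₂ : |v (pairSnd k)| ≤ δ / 2) :
    δ ^ 2 / 2 ≤ dist (pairPoly fun _ => v) (pairPoly fun _ => u) := by
  rw [dist_eq_norm]
  refine le_trans ?_ (ZeroAtInftyContinuousMap.abs_apply_le_norm _ k)
  rw [ZeroAtInftyContinuousMap.sub_apply, pairPoly_apply, pairPoly_apply, abs_sub_comm]
  calc δ ^ 2 / 2 ≤ |u (pairFst k)| * |u (pairSnd k)| - |v (pairFst k)| * |v (pairSnd k)| := by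
        nlinarith [abs_nonneg (v (pairFst k)), abs_nonneg (v (pairSnd k))]
    _ = |u (pairFst k) * u (pairSnd k)| - |v (pairFst k) * v (pairSnd k)| := by
        rw [abs_mul, abs_mul]
    _ ≤ _ := abs_sub_abs_le_abs_sub _ _

section Estimates

variable {X : Type*} [NormedAddCommGroup X] [NormedSpace ℝ X]

def HasUpperC0Estimate (x : ℕ → X) (C : ℝ) : Prop :=
  ∀ (n : ℕ) (a : ℕ → ℝ), (∀ i, |a i| ≤ 1) → ‖∑ i ∈ range n, a i • x i‖ ≤ C

def HasLowerC0Estimate (x : ℕ → X) (c : ℝ) : Prop :=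
  ∀ (n : ℕ) (a : ℕ → ℝ) (m : ℕ), m < n → 1 ≤ |a m| → c ≤ ‖∑ i ∈ range n, a i • x i‖

theorem IsEquivC0Basis.exists_estimates {x : ℕ → X} (hx : IsEquivC0Basis x) :
    ∃ c C : ℝ, 0 < c ∧ HasLowerC0Estimate x c ∧ HasUpperC0Estimate x C := by
  obtain ⟨c, C, hc, hcC, hx⟩ := hx
  refine ⟨c, C, hc, fun n a m hm ham => ?_, fun n a ha => ?_⟩
  · have hsup : 1 ≤ ⨆ i : Fin n, |a i| :=
      ham.trans (le_ciSup (f := fun i : Fin n => |a i|) (Set.finite_range _).bddAbove ⟨m, hm⟩)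
    nlinarith [(hx n a).1]
  · calc ‖∑ i ∈ range n, a i • x i‖ ≤ C * ⨆ i : Fin n, |a i| := (hx n a).2
      _ ≤ C * 1 :=
        mul_le_mul_of_nonneg_left (Real.iSup_le (fun i => ha i) zero_le_one) (hc.le.trans hcC)
      _ = C := mul_one C

variable {x : ℕ → X} {c C : ℝ}

theorem HasUpperC0Estimate.nonneg (h : HasUpperC0Estimate x C) : 0 ≤ C := by
  simpa using h 0 0 (by simp)

theorem HasUpperC0Estimate.norm_sum_range_le (h : HasUpperC0Estimate x C) (n : ℕ) :
    ‖∑ i ∈ range n, x i‖ ≤ C := by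
  simpa using h n 1 (by simp)

theorem HasLowerC0Estimate.mul_le_norm_sum_sum_Ico (h : HasLowerC0Estimate x c) {σ : ℕ → ℕ}
    (hσ : StrictMono σ) {r : ℕ} (hr : 0 < r) :
    r * c ≤ ‖∑ l ∈ range r, ∑ i ∈ Ico (σ l) (σ (r + l)), x i‖ := by
  set a : ℕ → ℝ := fun i => (r : ℝ)⁻¹ * #{l ∈ range r | σ l ≤ i ∧ i < σ (r + l)}
  have hsum : ∑ l ∈ range r, ∑ i ∈ Ico (σ l) (σ (r + l)), x i
      = (r : ℝ) • ∑ i ∈ range (σ (2 * r)), a i • x i := by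
    rw [← sum_range_card_smul_eq_sum_Ico x _ _ _ (n := σ (2 * r))
      fun l hl => hσ.monotone (by simp at hl; omega), Finset.smul_sum]
    refine Finset.sum_congr rfl fun i _ => ?_
    rw [smul_smul, ← mul_assoc, mul_inv_cancel₀ (by positivity), one_mul, Nat.cast_smul_eq_nsmul]
  have ha : a (σ (r - 1)) = 1 := by
    have : {l ∈ range r | σ l ≤ σ (r - 1) ∧ σ (r - 1) < σ (r + l)} = range r :=
      Finset.filter_true_of_mem fun l hl => by
        simp only [Finset.mem_range] at hl
        exact ⟨hσ.monotone (by omega), hσ (by omega)⟩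
    simp [a, this, hr.ne']
  have := h (σ (2 * r)) a (σ (r - 1)) (hσ (by omega)) (by simp [ha])
  rw [hsum, norm_smul, Real.norm_natCast]
  gcongr

end Estimates

section C0Sequences

variable {x : ℕ → c0} {c C : ℝ}

theorem HasUpperC0Estimate.sum_abs_apply_le (h : HasUpperC0Estimate x C) (j : ℕ)
    (F : Finset ℕ) : ∑ i ∈ F, |x i j| ≤ C := by
  classical
  obtain ⟨n, hFn⟩ := F.exists_nat_subset_range
  set a : ℕ → ℝ := fun i => if i ∈ F then (SignType.sign (x i j) : ℝ) else 0
  have ha : ∀ i, |a i| ≤ 1 := fun i => by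
    by_cases hi : i ∈ F
    · rcases lt_trichotomy (x i j) 0 with hx | hx | hx <;> simp [a, hi, hx]
    · simp [a, hi]
  calc ∑ i ∈ F, |x i j| = (∑ i ∈ range n, a i • x i) j := by
        rw [ZeroAtInftyContinuousMap.sum_apply,
          ← Finset.sum_subset hFn fun i _ hi => by simp [a, hi]]
        exact Finset.sum_congr rfl fun i hi => by simp [a, hi]
    _ ≤ ‖∑ i ∈ range n, a i • x i‖ :=
        (le_abs_self _).trans (ZeroAtInftyContinuousMap.abs_apply_le_norm _ _)
    _ ≤ C := h n a ha

theorem HasUpperC0Estimate.tendsto_sum_range_apply (h : HasUpperC0Estimate x C)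
    (j : ℕ) : Tendsto (fun n => (∑ i ∈ range n, x i) j) atTop (𝓝 (∑' i, x i j)) := by
  simp_rw [ZeroAtInftyContinuousMap.sum_apply]
  exact (summable_of_sum_le (fun i => abs_nonneg _) (h.sum_abs_apply_le j)).of_abs.hasSum
    |>.tendsto_sum_nat

theorem HasUpperC0Estimate.eventually_abs_sum_range_apply_lt (hup : HasUpperC0Estimate x C)
    {K : Set ℕ} {η : ℝ} (hη : 0 < η) (hK : ∀ j ∉ K, |∑' i, x i j| < η) (m : ℕ) :
    ∀ᶠ n in atTop, ∀ j ∉ K, η ≤ |(∑ i ∈ range m, x i) j| → |(∑ i ∈ range n, x i) j| < η := by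
  refine (((∑ i ∈ range m, x i).finite_setOf_le_norm_apply hη).eventually_all
    (p := fun j n => j ∉ K → |(∑ i ∈ range n, x i) j| < η)).2 (fun j _ => ?_) |>.mono
    fun n hn j hjK hjm => hn j hjm hjK
  by_cases hjK : j ∈ K
  · exact .of_forall fun _ h => (h hjK).elim
  · exact ((hup.tendsto_sum_range_apply j).abs.eventually_lt_const (hK j hjK)).mono
      fun _ h _ => h

theorem HasLowerC0Estimate.infinite_setOf_lt_abs_tsum_apply (hc : 0 < c)
    (hlow : HasLowerC0Estimate x c) (hup : HasUpperC0Estimate x C) :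
    {j | c / 8 < |∑' i, x i j|}.Infinite := by
  set K := {j | c / 8 < |∑' i, x i j|}
  intro hK
  set S : ℕ → c0 := fun n => ∑ i ∈ range n, x i
  have hnear : ∀ᶠ n in atTop, ∀ j ∈ K, |S n j - ∑' i, x i j| ≤ c / 4 :=
    hK.eventually_all.2 fun j _ => ((hup.tendsto_sum_range_apply j).eventually
      (Metric.closedBall_mem_nhds _ (by positivity : 0 < c / 4))).mono fun n hn => by
        rwa [Real.dist_eq] at hn
  have hfar : ∀ m, ∀ᶠ n in atTop, ∀ j ∉ K, c / 4 ≤ |S m j| → |S n j| < c / 4 :=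
    hup.eventually_abs_sum_range_apply_lt (by positivity) fun j hj => by
      simp only [K, Set.mem_ofPred_eq, not_lt] at hj
      linarith
  obtain ⟨σ, hσ, hσ_near, hσ_far⟩ := exists_strictMono_forall_lt_of_eventually hnear hfar
  obtain ⟨r, hr⟩ := exists_nat_gt (4 * C / c)
  have hr0 : (0 : ℝ) < r := (div_nonneg (by linarith [hup.nonneg]) hc.le).trans_lt hr
  have hrC : C ≤ r * (c / 4) := by rw [div_lt_iff₀ hc] at hr; linarith
  have hcoord : ∀ j, |∑ l ∈ range r, (S (σ (r + l)) j - S (σ l) j)| ≤ r * (3 * c / 4) := by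
    intro j
    by_cases hjK : j ∈ K
    · refine (abs_sum_range_sub_le_of_abs_sub_le (fun l => hσ_near l j hjK) r).trans ?_
      gcongr; linarith
    · have hbound : ∀ l, |S (σ l) j| ≤ C := fun l =>
        ((S (σ l)).abs_apply_le_norm j).trans (hup.norm_sum_range_le _)
      have := (abs_sum_range_sub_le (fun l => S (σ l) j) r).trans
        (sum_range_abs_le_of_large_once (by positivity) hbound
          (fun l l' hll' => hσ_far l l' hll' j hjK) (2 * r))
      push_cast at this
      linarith
  have hupper : ‖∑ l ∈ range r, ∑ i ∈ Ico (σ l) (σ (r + l)), x i‖ ≤ r * (3 * c / 4) := by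
    refine ZeroAtInftyContinuousMap.norm_le_of_forall_norm_apply_le (by positivity) fun j => ?_
    simpa [ZeroAtInftyContinuousMap.sum_apply, Finset.sum_Ico_eq_sub _ (hσ.monotone _), S]
      using hcoord j
  have hlower := hlow.mul_le_norm_sum_sum_Ico hσ (by exact_mod_cast hr0)
  nlinarith

theorem HasLowerC0Estimate.exists_lt_abs_sum_range_apply (hc : 0 < c)
    (hlow : HasLowerC0Estimate x c) (hup : HasUpperC0Estimate x C) (B : ℕ) :
    ∃ n p q, B ≤ p ∧ p < q ∧ c / 8 < |(∑ i ∈ range n, x i) p| ∧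
      c / 8 < |(∑ i ∈ range n, x i) q| := by
  have hK := hlow.infinite_setOf_lt_abs_tsum_apply hc hup
  obtain ⟨p, hp, hBp⟩ := hK.exists_gt B
  obtain ⟨q, hq, hpq⟩ := hK.exists_gt p
  obtain ⟨n, hnp, hnq⟩ := ((hup.tendsto_sum_range_apply p).abs.eventually_const_lt hp).and
    ((hup.tendsto_sum_range_apply q).abs.eventually_const_lt hq) |>.exists
  exact ⟨n, p, q, hBp.le, hpq, hnp, hnq⟩

theorem HasLowerC0Estimate.exists_pairPoly_sum_range_separated (hc : 0 < c)
    (hlow : HasLowerC0Estimate x c) (hup : HasUpperC0Estimate x C) :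
    ∃ m : ℕ → ℕ, ∀ l' l, l' < l → (c / 8) ^ 2 / 2 ≤
      dist (pairPoly fun _ => ∑ i ∈ range (m l'), x i)
        (pairPoly fun _ => ∑ i ∈ range (m l), x i) := by
  set S : ℕ → c0 := fun n => ∑ i ∈ range n, x i
  have hpair : ∀ B, ∃ n k, B ≤ pairFst k ∧ c / 8 < |S n (pairFst k)| ∧
      c / 8 < |S n (pairSnd k)| := fun B => by
    obtain ⟨n, p, q, hBp, hpq, hp, hq⟩ := hlow.exists_lt_abs_sum_range_apply hc hup B
    obtain ⟨k, rfl, rfl⟩ := exists_pairFst_eq_pairSnd_eq hpq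
    exact ⟨n, k, hBp, hp, hq⟩
  choose n k hk using hpair
  have htail : ∀ B, ∀ᶠ B' in atTop, ∀ j, B' ≤ j → |S (n B) j| ≤ c / 8 / 2 := fun B =>
    eventually_forall_ge_atTop.2 (((S (n B)).tendsto_atTop_nat.eventually
      (Metric.closedBall_mem_nhds 0 (by positivity : 0 < c / 8 / 2))).mono fun j hj => by
        simpa [Real.dist_eq] using hj)
  obtain ⟨σ, -, -, hσ⟩ :=
    exists_strictMono_forall_lt_of_eventually (.of_forall fun _ => trivial) htail
  refine ⟨n ∘ σ, fun l' l hl => ?_⟩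
  obtain ⟨hB, hp, hq⟩ := hk (σ l)
  exact sq_div_two_le_dist_pairPoly (by positivity) hp hq (hσ l' l hl _ hB)
    (hσ l' l hl _ (hB.trans (pairFst_lt_pairSnd _).le))

end C0Sequences

/-- There is a continuous 2-homogeneous polynomial `P : c₀ → c₀` vanishing on the unit vector
basis such that, for every sequence equivalent to the `c₀`-basis, the sequence of values of `P`
at the partial sums is not relatively compact. -/
theorem exists_vanishing_on_basis_partial_sums_not_relcompact :
    ∃ A : ContinuousMultilinearMap ℝ (fun _ : Fin 2 => c0) c0,
      (∀ n : ℕ, (A fun _ => e n) = 0) ∧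
      ∀ x : ℕ → c0, IsEquivC0Basis x →
        ¬ IsCompact (closure (Set.range fun n => A fun _ => ∑ i ∈ Finset.range n, x i)) := by
  refine ⟨pairPoly, pairPoly_basis, fun x hx => ?_⟩
  obtain ⟨c, C, hc, hlow, hup⟩ := hx.exists_estimates
  obtain ⟨m, hm⟩ := hlow.exists_pairPoly_sum_range_separated hc hup
  exact not_isCompact_of_forall_lt_le_dist (fun l => subset_closure (Set.mem_range_self (m l)))
    (by positivity) hm
end
end
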